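/- arXiv:1803.06244 — 8 statements merged into one kernel-verified Lean document; each statement's English description precedes it below -/
import Mathlib

section
/- For any forest F with maximum degree n ≥ 2, an edge-coloring of F is a nice coloring if and only if it is a proper edge-coloring. -/
open SimpleGraph

/-- A walk is an induced path if it is a path and the only adjacencies in `G` among its
vertices are its own edges. -/
def IsInducedPath {V : Type*} {G : SimpleGraph V} {u v : V} (p : G.Walk u v) : Prop :=
  p.IsPath ∧ ∀ x ∈ p.support, ∀ y ∈ p.support, G.Adj x y → s(x, y) ∈ p.edges

/-- An edge-coloring is nice if all triangles are monochromatic and for any two distinct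
nonadjacent vertices `u, v` there are two different colors appearing on every induced
`u,v`-path. -/
def IsNiceColoring {V X : Type*} (G : SimpleGraph V) (c : Sym2 V → X) : Prop :=
  (∀ u v w : V, G.Adj u v → G.Adj v w → G.Adj u w →
      c s(u, v) = c s(v, w) ∧ c s(v, w) = c s(u, w)) ∧
  (∀ u v : V, u ≠ v → ¬ G.Adj u v →
    ∃ i j : X, i ≠ j ∧ ∀ (p : G.Walk u v), IsInducedPath p →
      (∃ e ∈ p.edges, c e = i) ∧ (∃ e ∈ p.edges, c e = j))

/-- A proper edge-coloring: edges sharing a vertex receive distinct colors. -/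
def IsProperEdgeColoring {V X : Type*} (G : SimpleGraph V) (c : Sym2 V → X) : Prop :=
  ∀ ⦃u v w : V⦄, G.Adj u v → G.Adj u w → v ≠ w → c s(u, v) ≠ c s(u, w)

/-- In an acyclic graph, if `u` is adjacent to both `v` and `w` (with `v ≠ w`), then `v`
and `w` are not adjacent. -/
lemma acyclic_no_common {V : Type*} {F : SimpleGraph V} (hF : F.IsAcyclic) {u v w : V}
    (huv : F.Adj u v) (huw : F.Adj u w) (hvw : v ≠ w) : ¬ F.Adj v w := by
  intro h
  have heq := hF.path_unique
    (⟨SimpleGraph.Walk.cons h SimpleGraph.Walk.nil, by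
      simp [SimpleGraph.Walk.isPath_def, hvw]⟩ : F.Path v w)
    ⟨SimpleGraph.Walk.cons huv.symm
      (SimpleGraph.Walk.cons huw SimpleGraph.Walk.nil), by
      simp [SimpleGraph.Walk.isPath_def, hvw, huv.ne', huw.ne]⟩
  have hlen := congrArg (fun q : F.Path v w => q.1.length) heq
  simp at hlen

/-- For a forest `F` with maximum degree `n ≥ 2`, an edge-coloring of `F` is nice iff it is
a proper edge-coloring. -/
theorem forest_nice_iff_proper {V X : Type*} [Fintype V] (F : SimpleGraph V)
    [DecidableRel F.Adj] (n : ℕ) (hn : 2 ≤ n) (hF : F.IsAcyclic) (hdeg : F.maxDegree = n)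
    (c : Sym2 V → X) :
    IsNiceColoring F c ↔ IsProperEdgeColoring F c := by
  constructor
  · rintro ⟨-, hnice⟩ u v w huv huw hvw hc
    have hnadj : ¬ F.Adj v w := acyclic_no_common hF huv huw hvw
    obtain ⟨i, j, hij, hall⟩ := hnice v w hvw hnadj
    set p : F.Walk v w := SimpleGraph.Walk.cons huv.symm
      (SimpleGraph.Walk.cons huw SimpleGraph.Walk.nil) with hp
    have hsupp : p.support = [v, u, w] := by simp [hp]
    have hedges : p.edges = [s(v, u), s(u, w)] := by simp [hp]
    have hind : IsInducedPath p := by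
      constructor
      · simp [hp, SimpleGraph.Walk.isPath_def, hvw, huv.ne', huw.ne]
      · intro x hx y hy hxy
        rw [hsupp] at hx hy
        rw [hedges]
        simp only [List.mem_cons, List.not_mem_nil, or_false] at hx hy ⊢
        rcases hx with rfl | rfl | rfl <;> rcases hy with rfl | rfl | rfl
        · exact absurd hxy (F.loopless.irrefl _)
        · exact Or.inl rfl
        · exact absurd hxy hnadj
        · exact Or.inl (Sym2.eq_swap)
        · exact absurd hxy (F.loopless.irrefl _)
        · exact Or.inr rfl
        · exact absurd hxy.symm hnadj
        · exact Or.inr (Sym2.eq_swap)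
        · exact absurd hxy (F.loopless.irrefl _)
    obtain ⟨⟨e1, he1, hce1⟩, ⟨e2, he2, hce2⟩⟩ := hall p hind
    rw [hedges] at he1 he2
    have hvu : (s(v, u) : Sym2 V) = s(u, v) := Sym2.eq_swap
    have h1 : c e1 = c s(u, v) := by
      simp only [List.mem_cons, List.not_mem_nil, or_false] at he1
      rcases he1 with rfl | rfl
      · rw [hvu]
      · rw [hc]
    have h2 : c e2 = c s(u, v) := by
      simp only [List.mem_cons, List.not_mem_nil, or_false] at he2
      rcases he2 with rfl | rfl
      · rw [hvu]
      · rw [hc]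
    exact hij (hce1 ▸ hce2 ▸ (h1.trans h2.symm))
  · intro hp
    -- there exist two distinct colors
    have hne : Nonempty V := by
      by_contra h
      rw [not_nonempty_iff] at h
      have : F.maxDegree = 0 := by
        rw [SimpleGraph.maxDegree, Finset.univ_eq_empty, Finset.image_empty]
        rfl
      omega
    obtain ⟨v0, hv0⟩ := F.exists_maximal_degree_vertex
    have hd2 : 2 ≤ F.degree v0 := by omega
    rw [← SimpleGraph.card_neighborFinset_eq_degree] at hd2
    obtain ⟨a, ha, b, hb, hab⟩ := Finset.one_lt_card.mp
      (show 1 < (F.neighborFinset v0).card by omega)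
    rw [SimpleGraph.mem_neighborFinset] at ha hb
    have hi0j0 : c s(v0, a) ≠ c s(v0, b) := hp ha hb hab
    constructor
    · intro u v w huv hvw huw
      exact absurd hvw (acyclic_no_common hF huv huw hvw.ne)
    · intro u v huv hnadj
      by_cases hr : F.Reachable u v
      · classical
        obtain ⟨w0⟩ := hr
        obtain ⟨p0, hp0⟩ := w0.toPath
        match p0, hp0 with
        | SimpleGraph.Walk.nil, _ => exact absurd rfl huv
        | SimpleGraph.Walk.cons h SimpleGraph.Walk.nil, _ => exact absurd h hnadj
        | SimpleGraph.Walk.cons (v := b) h (SimpleGraph.Walk.cons (v := b') h' q), hp0 =>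
          refine ⟨c s(u, b), c s(b, b'), ?_, ?_⟩
          · have hub' : u ≠ b' := by
              have := hp0.support_nodup
              simp only [SimpleGraph.Walk.support_cons, List.nodup_cons] at this
              intro heq
              exact this.1 (by rw [heq]; simp)
            have h1 : c s(b, u) ≠ c s(b, b') := hp h.symm h' hub'
            rwa [Sym2.eq_swap] at h1
          · intro p hind
            have hpeq : p = SimpleGraph.Walk.cons h (SimpleGraph.Walk.cons h' q) := by
              have := hF.path_unique ⟨p, hind.1⟩ ⟨_, hp0⟩
              exact congrArg Subtype.val this
            subst hpeq
            constructor
            · exact ⟨s(u, b), by simp, rfl⟩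
            · exact ⟨s(b, b'), by simp, rfl⟩
      · exact ⟨c s(v0, a), c s(v0, b), hi0j0, fun p _ => absurd ⟨p⟩ hr⟩
end

section
/- The star K_{1,3}, the graph K_4 minus an edge, and every odd cycle C_{2k+1} with k ≥ 2 have no nice edge-coloring with 2 colors; consequently any graph containing one of them as an induced subgraph is not an induced subgraph of K_k □ K_k for any k. -/
open SimpleGraph

/-- The Hamming graph: the Cartesian product of `n` cliques of order `k`; two tuples are
adjacent iff they differ in exactly one coordinate. -/
def hammingGraph (n k : ℕ) : SimpleGraph (Fin n → Fin k) where
  Adj x y := ∃! i, x i ≠ y i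
  symm := by
    constructor
    rintro x y ⟨i, hi, hu⟩
    exact ⟨i, fun h => hi h.symm, fun j hj => hu j fun h => hj h.symm⟩
  loopless := by
    constructor
    rintro x ⟨i, hi, -⟩
    exact hi rfl
open SimpleGraph

/-- `K₄` minus an edge. -/
def K4minusE : SimpleGraph (Fin 4) := (⊤ : SimpleGraph (Fin 4)).deleteEdges {s(0, 1)}

/-! ### Auxiliary lemmas -/

/-- Induced paths are preserved by induced embeddings. -/
lemma IsInducedPath.map_emb {V W : Type*} {G : SimpleGraph V} {H : SimpleGraph W}
    (f : G ↪g H) {u v : V} {p : G.Walk u v} (hp : IsInducedPath p) :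
    IsInducedPath (p.map f.toHom) := by
  refine ⟨Walk.map_isPath_of_injective f.injective hp.1, ?_⟩
  intro x hx y hy hxy
  rw [Walk.support_map, List.mem_map] at hx hy
  obtain ⟨a, ha, rfl⟩ := hx
  obtain ⟨b, hb, rfl⟩ := hy
  rw [Walk.edges_map, List.mem_map]
  exact ⟨s(a, b), hp.2 a ha b hb (f.map_adj_iff.1 hxy), rfl⟩

/-- A nice coloring pulls back along an induced embedding. -/
lemma IsNiceColoring.pullback {V W X : Type*} {G : SimpleGraph V} {H : SimpleGraph W}
    (f : G ↪g H) {c : Sym2 W → X} (hc : IsNiceColoring H c) :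
    IsNiceColoring G (fun e => c (e.map f)) := by
  obtain ⟨h1, h2⟩ := hc
  constructor
  · intro u v w huv hvw huw
    simpa using h1 (f u) (f v) (f w) (f.map_adj_iff.2 huv) (f.map_adj_iff.2 hvw)
      (f.map_adj_iff.2 huw)
  · intro u v huv hnadj
    obtain ⟨i, j, hij, hpaths⟩ := h2 (f u) (f v) (fun h => huv (f.injective h))
      (fun h => hnadj (f.map_adj_iff.1 h))
    refine ⟨i, j, hij, fun p hp => ?_⟩
    obtain ⟨⟨ei, hei, hci⟩, ⟨ej, hej, hcj⟩⟩ := hpaths (p.map f.toHom) (hp.map_emb f)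
    rw [Walk.edges_map, List.mem_map] at hei hej
    obtain ⟨e, he, rfl⟩ := hei
    obtain ⟨e', he', rfl⟩ := hej
    exact ⟨⟨e, he, hci⟩, ⟨e', he', hcj⟩⟩

/-- The canonical coloring of the Hamming graph `H(2, m)` by the coordinate in which
an edge differs. -/
def hamColor (m : ℕ) : Sym2 (Fin 2 → Fin m) → Fin 2 :=
  Sym2.lift ⟨fun x y => if x 0 = y 0 then 1 else 0,
    fun x y => if_congr eq_comm rfl rfl⟩

lemma hamColor_mk {m : ℕ} (x y : Fin 2 → Fin m) :
    hamColor m s(x, y) = if x 0 = y 0 then 1 else 0 := rfl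

lemma ham_adj_cases {m : ℕ} {x y : Fin 2 → Fin m} (h : (hammingGraph 2 m).Adj x y) :
    (x 0 ≠ y 0 ∧ x 1 = y 1) ∨ (x 0 = y 0 ∧ x 1 ≠ y 1) := by
  obtain ⟨i, hi, hu⟩ := h
  by_cases h0 : x 0 = y 0
  · refine Or.inr ⟨h0, ?_⟩
    have := hu 0
    fin_cases i
    · exact absurd h0 hi
    · exact hi
  · refine Or.inl ⟨h0, ?_⟩
    by_contra h1
    have e0 := hu 0 h0
    have e1 := hu 1 h1
    rw [← e0] at e1
    exact absurd e1 (by decide)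

lemma ham_nonadj {m : ℕ} {u v : Fin 2 → Fin m} (hne : u ≠ v)
    (hna : ¬ (hammingGraph 2 m).Adj u v) : u 0 ≠ v 0 ∧ u 1 ≠ v 1 := by
  obtain ⟨i, hi⟩ := Function.ne_iff.1 hne
  by_cases h0 : u 0 = v 0
  · have h1 : u 1 ≠ v 1 := by
      fin_cases i
      · exact absurd h0 hi
      · exact hi
    exact absurd ⟨1, h1, fun j hj => by
      fin_cases j
      · exact absurd h0 hj
      · rfl⟩ hna
  · by_cases h1 : u 1 = v 1
    · exact absurd ⟨0, h0, fun j hj => by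
        fin_cases j
        · rfl
        · exact absurd h1 hj⟩ hna
    · exact ⟨h0, h1⟩

lemma ham_walk_color0 {m : ℕ} {u v : Fin 2 → Fin m} (p : (hammingGraph 2 m).Walk u v)
    (h : u 0 ≠ v 0) : ∃ e ∈ p.edges, hamColor m e = 0 := by
  induction p with
  | nil => exact absurd rfl h
  | @cons a b d hadj q ih =>
    by_cases h0 : a 0 = b 0
    · obtain ⟨e, he, hc⟩ := ih (fun hb => h (h0.trans hb))
      exact ⟨e, by simp [he], hc⟩
    · exact ⟨s(a, b), by simp, by rw [hamColor_mk, if_neg h0]⟩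

lemma ham_walk_color1 {m : ℕ} {u v : Fin 2 → Fin m} (p : (hammingGraph 2 m).Walk u v)
    (h : u 1 ≠ v 1) : ∃ e ∈ p.edges, hamColor m e = 1 := by
  induction p with
  | nil => exact absurd rfl h
  | @cons a b d hadj q ih =>
    by_cases h1 : a 1 = b 1
    · obtain ⟨e, he, hc⟩ := ih (fun hb => h (h1.trans hb))
      exact ⟨e, by simp [he], hc⟩
    · have h0 : a 0 = b 0 := by
        rcases ham_adj_cases hadj with ⟨-, h⟩ | ⟨h, -⟩
        · exact absurd h h1
        · exact h
      exact ⟨s(a, b), by simp, by rw [hamColor_mk, if_pos h0]⟩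

lemma ham_nice (m : ℕ) : IsNiceColoring (hammingGraph 2 m) (hamColor m) := by
  constructor
  · intro u v w huv hvw huw
    rcases ham_adj_cases huv with ⟨a0, a1⟩ | ⟨a0, a1⟩ <;>
      rcases ham_adj_cases hvw with ⟨b0, b1⟩ | ⟨b0, b1⟩ <;>
      rcases ham_adj_cases huw with ⟨c0, c1⟩ | ⟨c0, c1⟩ <;>
      simp only [hamColor_mk] <;>
      first
        | (exfalso; first
            | exact c1 (a1.trans b1)
            | exact a1 (c1.trans b1.symm)
            | exact b1 (a1.symm.trans c1)
            | exact c0 (a0.trans b0)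
            | exact a0 (c0.trans b0.symm)
            | exact b0 (a0.symm.trans c0))
        | simp [a0, b0, c0]
  · intro u v hne hna
    obtain ⟨h0, h1⟩ := ham_nonadj hne hna
    exact ⟨0, 1, by decide, fun p _ => ⟨ham_walk_color0 p h0, ham_walk_color1 p h1⟩⟩


lemma two_colors_ne {α : Type*} {c : Sym2 α → Fin 2} {e1 e2 : Sym2 α} {i j : Fin 2}
    (hij : i ≠ j) (hi : c e1 = i ∨ c e2 = i) (hj : c e1 = j ∨ c e2 = j) : c e1 ≠ c e2 := by
  rcases hi with hi | hi <;> rcases hj with hj | hj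
  · exact absurd (hi.symm.trans hj) hij
  · rw [hi, hj]; exact hij
  · rw [hj, hi]; exact fun h => hij h.symm
  · exact absurd (hi.symm.trans hj) hij

lemma star_false (c : Sym2 (Fin 1 ⊕ Fin 3) → Fin 2)
    (hc : IsNiceColoring (completeBipartiteGraph (Fin 1) (Fin 3)) c) : False := by
  have key : ∀ a b : Fin 3, a ≠ b →
      c s(Sum.inl 0, Sum.inr a) ≠ c s(Sum.inl 0, Sum.inr b) := by
    intro a b hab
    obtain ⟨-, h2⟩ := hc
    obtain ⟨i, j, hij, hp⟩ := h2 (Sum.inr a) (Sum.inr b)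
      (fun h => hab (Sum.inr.inj h)) (by simp)
    have hadj1 : (completeBipartiteGraph (Fin 1) (Fin 3)).Adj (Sum.inr a) (Sum.inl 0) := by simp
    have hadj2 : (completeBipartiteGraph (Fin 1) (Fin 3)).Adj (Sum.inl 0) (Sum.inr b) := by simp
    set p : (completeBipartiteGraph (Fin 1) (Fin 3)).Walk (Sum.inr a) (Sum.inr b) :=
      Walk.cons hadj1 (Walk.cons hadj2 Walk.nil) with hpdef
    have hind : IsInducedPath p := by
      constructor
      · rw [Walk.isPath_def]
        simp [hpdef, hab]
      · intro x hx y hy hxy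
        simp only [hpdef, Walk.support_cons, Walk.support_nil, List.mem_cons,
          List.mem_singleton, List.not_mem_nil, or_false] at hx hy
        rcases hx with rfl | rfl | rfl <;> rcases hy with rfl | rfl | rfl <;>
          first
            | exact (hxy.ne rfl).elim
            | (simp [hpdef, Sym2.eq_swap]; done)
            | exact absurd hxy (by simp)
    obtain ⟨⟨ei, hei, hci⟩, ⟨ej, hej, hcj⟩⟩ := hp p hind
    simp only [hpdef, Walk.edges_cons, Walk.edges_nil, List.mem_cons, List.mem_singleton,
      List.not_mem_nil, or_false] at hei hej
    have hne : c s(Sum.inr a, Sum.inl 0) ≠ c s(Sum.inl 0, Sum.inr b) := by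
      refine two_colors_ne hij ?_ ?_
      · rcases hei with rfl | rfl
        · exact Or.inl hci
        · exact Or.inr hci
      · rcases hej with rfl | rfl
        · exact Or.inl hcj
        · exact Or.inr hcj
    rwa [Sym2.eq_swap] at hne
  have h01 := key 0 1 (by decide)
  have h02 := key 0 2 (by decide)
  have h12 := key 1 2 (by decide)
  set x0 := c s(Sum.inl 0, Sum.inr 0)
  set x1 := c s(Sum.inl 0, Sum.inr 1)
  set x2 := c s(Sum.inl 0, Sum.inr 2)
  have b0 := x0.isLt
  have b1 := x1.isLt
  have b2 := x2.isLt
  have v01 : x0.val ≠ x1.val := fun h => h01 (Fin.val_injective h)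
  have v02 : x0.val ≠ x2.val := fun h => h02 (Fin.val_injective h)
  have v12 : x1.val ≠ x2.val := fun h => h12 (Fin.val_injective h)
  omega

lemma k4_false (c : Sym2 (Fin 4) → Fin 2) (hc : IsNiceColoring K4minusE c) : False := by
  obtain ⟨h1, h2⟩ := hc
  have hA : ∀ x y : Fin 4, x ≠ y → s(x, y) ≠ s(0, 1) → K4minusE.Adj x y := by
    intro x y h h'
    rw [K4minusE, deleteEdges_adj]
    exact ⟨h, by simpa using h'⟩
  have hnadj : ¬ K4minusE.Adj 0 1 := by
    rw [K4minusE, deleteEdges_adj]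
    rintro ⟨-, hmem⟩
    exact hmem rfl
  have adj02 : K4minusE.Adj 0 2 := hA 0 2 (by decide) (by decide)
  have adj21 : K4minusE.Adj 2 1 := hA 2 1 (by decide) (by decide)
  have t023 := h1 0 2 3 adj02 (hA 2 3 (by decide) (by decide)) (hA 0 3 (by decide) (by decide))
  have t123 := h1 1 2 3 (hA 1 2 (by decide) (by decide)) (hA 2 3 (by decide) (by decide))
    (hA 1 3 (by decide) (by decide))
  have keyeq : c s(0, 2) = c s(1, 2) := t023.1.trans t123.1.symm
  obtain ⟨i, j, hij, hp⟩ := h2 0 1 (by decide) hnadj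
  set p : K4minusE.Walk 0 1 := Walk.cons adj02 (Walk.cons adj21 Walk.nil) with hpdef
  have hind : IsInducedPath p := by
    constructor
    · rw [Walk.isPath_def]
      simp [hpdef]
    · intro x hx y hy hxy
      simp only [hpdef, Walk.support_cons, Walk.support_nil, List.mem_cons,
        List.mem_singleton, List.not_mem_nil, or_false] at hx hy
      rcases hx with rfl | rfl | rfl <;> rcases hy with rfl | rfl | rfl <;>
        first
          | exact (hxy.ne rfl).elim
          | (simp [hpdef, Sym2.eq_swap]; done)
          | exact (hnadj hxy).elim
          | exact (hnadj hxy.symm).elim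
  obtain ⟨⟨ei, hei, hci⟩, ⟨ej, hej, hcj⟩⟩ := hp p hind
  simp only [hpdef, Walk.edges_cons, Walk.edges_nil, List.mem_cons, List.mem_singleton,
    List.not_mem_nil, or_false] at hei hej
  have hne : c s(0, 2) ≠ c s(2, 1) := by
    refine two_colors_ne hij ?_ ?_
    · rcases hei with rfl | rfl
      · exact Or.inl hci
      · exact Or.inr hci
    · rcases hej with rfl | rfl
      · exact Or.inl hcj
      · exact Or.inr hcj
  rw [show s((1 : Fin 4), 2) = s(2, 1) from Sym2.eq_swap] at keyeq
  exact hne keyeq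

open Fin.CommRing in
lemma cycle_key {m : ℕ} [NeZero m] (hm : 5 ≤ m) {c : Sym2 (Fin m) → Fin 2}
    (hc : IsNiceColoring (cycleGraph m) c) (v : Fin m) :
    c s(v, v + 1) ≠ c s(v + 1, v + 1 + 1) := by
  have hdvd : ∀ a : ℕ, 0 < a → a < 5 → ((a : Fin m) ≠ 0) := by
    intro a h1 h2 h
    rw [Fin.natCast_eq_zero] at h
    exact absurd (Nat.le_of_dvd h1 h) (by omega)
  have hone : ((1 : Fin m)).val = 1 := by
    rw [Fin.val_one']
    exact Nat.mod_eq_of_lt (by omega)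
  have adj1 : ∀ w : Fin m, (cycleGraph m).Adj w (w + 1) := by
    intro w
    rw [cycleGraph_adj']
    right
    rw [add_sub_cancel_left]
    exact hone
  have hne1 : ∀ w : Fin m, w ≠ w + 1 := by
    intro w h
    refine hdvd 1 (by omega) (by omega) ?_
    have : ((1 : ℕ) : Fin m) = (1 : Fin m) := by push_cast; rfl
    rw [this]
    linear_combination -h
  have hne2 : v ≠ v + 1 + 1 := by
    intro h
    refine hdvd 2 (by omega) (by omega) ?_
    have : ((2 : ℕ) : Fin m) = (2 : Fin m) := by push_cast; rfl
    rw [this]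
    linear_combination -h
  have nadj2 : ¬ (cycleGraph m).Adj v (v + 1 + 1) := by
    rw [cycleGraph_adj']
    rintro (h | h)
    · have h' : v - (v + 1 + 1) = 1 := Fin.val_injective (h.trans hone.symm)
      refine hdvd 3 (by omega) (by omega) ?_
      have : ((3 : ℕ) : Fin m) = (3 : Fin m) := by push_cast; rfl
      rw [this]
      linear_combination -h'
    · have h' : v + 1 + 1 - v = 1 := Fin.val_injective (h.trans hone.symm)
      refine hdvd 1 (by omega) (by omega) ?_
      have : ((1 : ℕ) : Fin m) = (1 : Fin m) := by push_cast; rfl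
      rw [this]
      linear_combination h'
  obtain ⟨-, h2⟩ := hc
  obtain ⟨i, j, hij, hp⟩ := h2 v (v + 1 + 1) hne2 nadj2
  set p : (cycleGraph m).Walk v (v + 1 + 1) :=
    Walk.cons (adj1 v) (Walk.cons (adj1 (v + 1)) Walk.nil) with hpdef
  have hind : IsInducedPath p := by
    constructor
    · rw [Walk.isPath_def]
      simp only [hpdef, Walk.support_cons, Walk.support_nil]
      refine List.nodup_cons.2 ⟨?_, List.nodup_cons.2 ⟨?_, List.nodup_singleton _⟩⟩
      · simp only [List.mem_cons, List.mem_singleton, List.not_mem_nil, or_false]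
        rintro (h | h)
        · exact hne1 v h
        · exact hne2 h
      · simp only [List.mem_singleton]
        exact hne1 (v + 1)
    · intro x hx y hy hxy
      simp only [hpdef, Walk.support_cons, Walk.support_nil, List.mem_cons,
        List.mem_singleton, List.not_mem_nil, or_false] at hx hy
      rcases hx with rfl | rfl | rfl <;> rcases hy with rfl | rfl | rfl <;>
        first
          | exact (hxy.ne rfl).elim
          | (simp [hpdef, Sym2.eq_swap]; done)
          | exact (nadj2 hxy).elim
          | exact (nadj2 hxy.symm).elim
  obtain ⟨⟨ei, hei, hci⟩, ⟨ej, hej, hcj⟩⟩ := hp p hind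
  simp only [hpdef, Walk.edges_cons, Walk.edges_nil, List.mem_cons, List.mem_singleton,
    List.not_mem_nil, or_false] at hei hej
  refine two_colors_ne hij ?_ ?_
  · rcases hei with rfl | rfl
    · exact Or.inl hci
    · exact Or.inr hci
  · rcases hej with rfl | rfl
    · exact Or.inl hcj
    · exact Or.inr hcj

open Fin.CommRing in
lemma cycle_false {k : ℕ} (hk : 2 ≤ k) (c : Sym2 (Fin (2 * k + 1)) → Fin 2)
    (hc : IsNiceColoring (cycleGraph (2 * k + 1)) c) : False := by
  have hm : 5 ≤ 2 * k + 1 := by omega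
  set g : ℕ → Fin 2 := fun n => c s((n : Fin (2 * k + 1)), (n : Fin (2 * k + 1)) + 1)
    with hgdef
  have hstep : ∀ n : ℕ, g n ≠ g (n + 1) := by
    intro n
    have := cycle_key hm hc ((n : Fin (2 * k + 1)))
    simpa [hgdef, Nat.cast_add, Nat.cast_one] using this
  have gform : ∀ n : ℕ, g n = g 0 + (n : Fin 2) := by
    intro n
    induction n with
    | zero => simp
    | succ n ih =>
      have hflip : ∀ x y : Fin 2, x ≠ y → y = x + 1 := by decide
      rw [hflip _ _ (hstep n), ih]
      push_cast
      ring
  have hgm : g (2 * k + 1) = g 0 := by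
    simp [hgdef, Fin.natCast_self]
  have hfin := gform (2 * k + 1)
  rw [hgm] at hfin
  have hm2 : (((2 * k + 1 : ℕ)) : Fin 2) = 1 := by
    push_cast
    ring
  rw [hm2] at hfin
  have hx : ∀ x : Fin 2, ¬ x = x + 1 := by decide
  exact absurd hfin (hx _)

/-- The star `K_{1,3}`, the graph `K₄` minus an edge, and every odd cycle `C_{2k+1}` with
`k ≥ 2` have no nice edge-coloring with 2 colors; consequently, any graph containing one of
them as an induced subgraph is not an induced subgraph of `K_k □ K_k` for any `k`. -/
theorem no_nice_two_coloring :
    (∀ c : Sym2 (Fin 1 ⊕ Fin 3) → Fin 2,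
      ¬ IsNiceColoring (completeBipartiteGraph (Fin 1) (Fin 3)) c) ∧
    (∀ c : Sym2 (Fin 4) → Fin 2, ¬ IsNiceColoring K4minusE c) ∧
    (∀ k : ℕ, 2 ≤ k → ∀ c : Sym2 (Fin (2 * k + 1)) → Fin 2,
      ¬ IsNiceColoring (SimpleGraph.cycleGraph (2 * k + 1)) c) ∧
    (∀ (W : Type) (G : SimpleGraph W),
      (Nonempty (completeBipartiteGraph (Fin 1) (Fin 3) ↪g G) ∨
        Nonempty (K4minusE ↪g G) ∨
        (∃ k : ℕ, 2 ≤ k ∧ Nonempty (SimpleGraph.cycleGraph (2 * k + 1) ↪g G))) →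
      ∀ m : ℕ, ¬ Nonempty (G ↪g hammingGraph 2 m)) := by
  refine ⟨star_false, k4_false, fun k hk c hc => cycle_false hk c hc, ?_⟩
  rintro W G h m ⟨f⟩
  have hnice := (ham_nice m).pullback f
  rcases h with ⟨⟨e⟩⟩ | ⟨⟨e⟩⟩ | ⟨k, hk, ⟨e⟩⟩
  · exact star_false _ (hnice.pullback e)
  · exact k4_false _ (hnice.pullback e)
  · exact cycle_false hk _ (hnice.pullback e)
end

section
/- Let H be a 2-Hamming graph with 2-Hamming decomposition {F₁, F₂}, and let K be a connected component of F₁. Then every vertex v ∈ V(H) \ V(K) is adjacent in H to at most one vertex of K. -/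
open SimpleGraph

/-- A graph is a (pairwise vertex-)disjoint union of cliques. -/
def IsClusterGraph {V : Type*} (F : SimpleGraph V) : Prop :=
  ∀ u v w : V, F.Adj u v → F.Adj v w → u ≠ w → F.Adj u w

/-- `{F₁, F₂}` is a 2-Hamming decomposition of `H`: the edge sets of the spanning subgraphs
`F₁` and `F₂` partition `E(H)` and each `Fᵢ` is a disjoint union of cliques. -/
def IsTwoHammingDecomp {V : Type*} (H F1 F2 : SimpleGraph V) : Prop :=
  F1 ⊔ F2 = H ∧ Disjoint F1 F2 ∧ IsClusterGraph F1 ∧ IsClusterGraph F2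

/-- If `{F₁, F₂}` is a 2-Hamming decomposition of `H` and `K` is a connected component of
`F₁`, then every vertex outside `K` is adjacent in `H` to at most one vertex of `K`. -/
theorem twoHamming_component_neighbors {V : Type*} (H F1 F2 : SimpleGraph V)
    (hdec : IsTwoHammingDecomp H F1 F2) (K : F1.ConnectedComponent)
    (v : V) (hv : v ∉ K.supp) :
    ∀ x ∈ K.supp, ∀ y ∈ K.supp, H.Adj v x → H.Adj v y → x = y := by
  obtain ⟨hsup, hdisj, hc1, hc2⟩ := hdec
  -- In a cluster graph, reachable distinct vertices are adjacent
  have key : ∀ {F : SimpleGraph V}, IsClusterGraph F → ∀ {a b : V},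
      F.Reachable a b → a = b ∨ F.Adj a b := by
    intro F hF a b hab
    obtain ⟨w⟩ := hab
    induction w with
    | nil => exact Or.inl rfl
    | cons h p ih =>
      rcases ih with rfl | h'
      · exact Or.inr h
      · refine (eq_or_ne _ _).imp id fun hac => hF _ _ _ h h' hac
  intro x hx y hy hvx hvy
  -- H-adjacency to v must be via F2, since v ∉ K
  have hF2 : ∀ z ∈ K.supp, H.Adj v z → F2.Adj v z := by
    intro z hz hvz
    rw [← hsup] at hvz
    rcases hvz with h | h
    · exact absurd (by
        rw [SimpleGraph.ConnectedComponent.mem_supp_iff] at hz ⊢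
        rw [← hz]
        exact SimpleGraph.ConnectedComponent.sound h.reachable) hv
    · exact h
  have hvx2 := hF2 x hx hvx
  have hvy2 := hF2 y hy hvy
  by_contra hxy
  -- x, y adjacent in F2 by cluster property
  have hxy2 : F2.Adj x y := hc2 x v y hvx2.symm hvy2 hxy
  -- x, y reachable in F1, hence adjacent in F1
  have hreach : F1.Reachable x y := by
    rw [SimpleGraph.ConnectedComponent.mem_supp_iff] at hx hy
    exact SimpleGraph.ConnectedComponent.exact (hx.trans hy.symm)
  rcases key hc1 hreach with rfl | hxy1
  · exact hxy rfl
  · have hbot : (F1 ⊓ F2).Adj x y := ⟨hxy1, hxy2⟩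
    rw [disjoint_iff.mp hdisj] at hbot
    exact hbot
end

section
/- For any 2-Hamming graph H, the minimum k such that H is an induced subgraph of K_k □ K_k equals the minimum, over all 2-Hamming decompositions {F₁, F₂} of H, of max(C(F₁), C(F₂)), where C(F) denotes the number of connected components of F. -/
open SimpleGraph

lemma fin_two_funext {k : ℕ} {x y : Fin 2 → Fin k} (h0 : x 0 = y 0) (h1 : x 1 = y 1) :
    x = y := by
  funext i; fin_cases i <;> assumption

lemma hamming_adj_iff {k : ℕ} {x y : Fin 2 → Fin k} :
    (hammingGraph 2 k).Adj x y ↔ (x 0 = y 0 ∧ x 1 ≠ y 1) ∨ (x 0 ≠ y 0 ∧ x 1 = y 1) := by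
  constructor
  · rintro ⟨i, hi, hu⟩
    fin_cases i
    · refine Or.inr ⟨hi, ?_⟩
      by_contra h1
      exact absurd (hu 1 h1) (by decide)
    · refine Or.inl ⟨?_, hi⟩
      by_contra h0
      exact absurd (hu 0 h0) (by decide)
  · rintro (⟨h0, h1⟩ | ⟨h0, h1⟩)
    · refine ⟨1, h1, fun j hj => ?_⟩
      fin_cases j
      · exact absurd h0 hj
      · rfl
    · refine ⟨0, h0, fun j hj => ?_⟩
      fin_cases j
      · rfl
      · exact absurd h1 hj

lemma cluster_reachable {V : Type*} {F : SimpleGraph V} (hF : IsClusterGraph F)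
    {u v : V} (h : F.Reachable u v) : u = v ∨ F.Adj u v := by
  obtain ⟨w⟩ := h
  induction w with
  | nil => exact Or.inl rfl
  | @cons a b c hab p ih =>
    rcases ih with rfl | hadj
    · exact Or.inr hab
    · by_cases hac : a = c
      · exact Or.inl hac
      · exact Or.inr (hF a b c hab hadj hac)

lemma cluster_mk_eq {V : Type*} {F : SimpleGraph V} (hF : IsClusterGraph F) (u v : V) :
    F.connectedComponentMk u = F.connectedComponentMk v ↔ u = v ∨ F.Adj u v := by
  constructor
  · intro h
    exact cluster_reachable hF (SimpleGraph.ConnectedComponent.eq.mp h)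
  · rintro (rfl | h)
    · rfl
    · exact SimpleGraph.ConnectedComponent.eq.mpr h.reachable

lemma walk_const {V : Type*} {G : SimpleGraph V} {β : Sort*} (f : V → β)
    (h : ∀ v w, G.Adj v w → f v = f w) {v w : V} (p : G.Walk v w) : f v = f w := by
  induction p with
  | nil => rfl
  | cons ha _ ih => exact (h _ _ ha).trans ih

lemma decomp_embedding {V : Type*} {H F1 F2 : SimpleGraph V}
    (hd : IsTwoHammingDecomp H F1 F2) {k : ℕ} [Finite V]
    (h1 : Nat.card F1.ConnectedComponent ≤ k) (h2 : Nat.card F2.ConnectedComponent ≤ k) :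
    Nonempty (H ↪g hammingGraph 2 k) := by
  obtain ⟨hsup, hdisj, hc1, hc2⟩ := hd
  have hnot : ∀ u v : V, ¬(F1.Adj u v ∧ F2.Adj u v) := by
    intro u v ⟨ha, hb⟩
    have hbot : F1 ⊓ F2 = ⊥ := disjoint_iff.mp hdisj
    have : (F1 ⊓ F2).Adj u v := ⟨ha, hb⟩
    rw [hbot] at this
    exact this
  have hH : ∀ u v : V, H.Adj u v ↔ F1.Adj u v ∨ F2.Adj u v := by
    intro u v; rw [← hsup]; rfl
  let e1 : F1.ConnectedComponent ↪ Fin k :=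
    (Finite.equivFin _).toEmbedding.trans (Fin.castLEEmb h1)
  let e2 : F2.ConnectedComponent ↪ Fin k :=
    (Finite.equivFin _).toEmbedding.trans (Fin.castLEEmb h2)
  let f : V → Fin 2 → Fin k := fun v =>
    ![e1 (F1.connectedComponentMk v), e2 (F2.connectedComponentMk v)]
  have hf0 : ∀ u v : V, f u 0 = f v 0 ↔ (u = v ∨ F1.Adj u v) := by
    intro u v
    simp only [f, Matrix.cons_val_zero]
    rw [e1.apply_eq_iff_eq]
    exact cluster_mk_eq hc1 u v
  have hf1 : ∀ u v : V, f u 1 = f v 1 ↔ (u = v ∨ F2.Adj u v) := by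
    intro u v
    simp only [f, Matrix.cons_val_one, Matrix.head_cons, Matrix.cons_val_zero]
    rw [e2.apply_eq_iff_eq]
    exact cluster_mk_eq hc2 u v
  have hinj : Function.Injective f := by
    intro u v h
    have h0 := (hf0 u v).mp (congrFun h 0)
    have h1' := (hf1 u v).mp (congrFun h 1)
    rcases h0 with rfl | h0
    · rfl
    rcases h1' with rfl | h1'
    · rfl
    exact absurd ⟨h0, h1'⟩ (hnot u v)
  refine ⟨⟨⟨f, hinj⟩, ?_⟩⟩
  intro u v
  simp only [Function.Embedding.coeFn_mk]
  rw [hamming_adj_iff, hH]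
  constructor
  · rintro (⟨h0, h1'⟩ | ⟨h0, h1'⟩)
    · rcases (hf0 u v).mp h0 with rfl | ha
      · exact absurd rfl (fun hh => h1' (congrArg (fun x => f x 1) hh))
      · exact Or.inl ha
    · rcases (hf1 u v).mp h1' with rfl | ha
      · exact absurd rfl (fun hh => h0 (congrArg (fun x => f x 0) hh))
      · exact Or.inr ha
  · rintro (ha | ha)
    · refine Or.inl ⟨(hf0 u v).mpr (Or.inr ha), ?_⟩
      intro h1'
      rcases (hf1 u v).mp h1' with rfl | hb
      · exact F1.loopless.irrefl u ha
      · exact hnot u v ⟨ha, hb⟩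
    · refine Or.inr ⟨?_, (hf1 u v).mpr (Or.inr ha)⟩
      intro h0
      rcases (hf0 u v).mp h0 with rfl | hb
      · exact F2.loopless.irrefl u ha
      · exact hnot u v ⟨hb, ha⟩

lemma embedding_decomp {V : Type*} [Finite V] {H : SimpleGraph V} {k : ℕ}
    (φ : H ↪g hammingGraph 2 k) :
    ∃ F1 F2 : SimpleGraph V, IsTwoHammingDecomp H F1 F2 ∧
      Nat.card F1.ConnectedComponent ≤ k ∧ Nat.card F2.ConnectedComponent ≤ k := by
  have hadj : ∀ u v : V, H.Adj u v ↔
      (φ u 0 = φ v 0 ∧ φ u 1 ≠ φ v 1) ∨ (φ u 0 ≠ φ v 0 ∧ φ u 1 = φ v 1) := by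
    intro u v
    rw [← φ.map_rel_iff, hamming_adj_iff]
  have hne : ∀ {u v : V}, u ≠ v → φ u ≠ φ v := fun h hh => h (φ.injective hh)
  let F1 : SimpleGraph V :=
    { Adj := fun u v => H.Adj u v ∧ φ u 0 = φ v 0
      symm := ⟨fun u v ⟨h, he⟩ => ⟨h.symm, he.symm⟩⟩
      loopless := ⟨fun u ⟨h, _⟩ => H.loopless.irrefl u h⟩ }
  let F2 : SimpleGraph V :=
    { Adj := fun u v => H.Adj u v ∧ φ u 0 ≠ φ v 0
      symm := ⟨fun u v ⟨h, he⟩ => ⟨h.symm, fun hh => he hh.symm⟩⟩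
      loopless := ⟨fun u ⟨h, _⟩ => H.loopless.irrefl u h⟩ }
  have hF2eq : ∀ u v : V, F2.Adj u v → φ u 1 = φ v 1 := by
    intro u v ⟨h, he⟩
    rcases (hadj u v).mp h with ⟨h0, _⟩ | ⟨_, h1⟩
    · exact absurd h0 he
    · exact h1
  have hcl1 : IsClusterGraph F1 := by
    intro u v w ⟨huv, e1⟩ ⟨hvw, e2⟩ huw
    have h0 : φ u 0 = φ w 0 := e1.trans e2
    have h1 : φ u 1 ≠ φ w 1 := fun hh => hne huw (fin_two_funext h0 hh)
    exact ⟨(hadj u w).mpr (Or.inl ⟨h0, h1⟩), h0⟩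
  have hcl2 : IsClusterGraph F2 := by
    intro u v w h2uv h2vw huw
    have h1 : φ u 1 = φ w 1 := (hF2eq u v h2uv).trans (hF2eq v w h2vw)
    have h0 : φ u 0 ≠ φ w 0 := fun hh => hne huw (fin_two_funext hh h1)
    exact ⟨(hadj u w).mpr (Or.inr ⟨h0, h1⟩), h0⟩
  have hsup : F1 ⊔ F2 = H := by
    ext u v
    simp only [SimpleGraph.sup_adj]
    constructor
    · rintro (⟨h, _⟩ | ⟨h, _⟩) <;> exact h
    · intro h
      by_cases h0 : φ u 0 = φ v 0
      · exact Or.inl ⟨h, h0⟩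
      · exact Or.inr ⟨h, h0⟩
  have hdisj : Disjoint F1 F2 := by
    rw [disjoint_iff]
    ext u v
    simp only [SimpleGraph.inf_adj, SimpleGraph.bot_adj, iff_false]
    rintro ⟨⟨_, h0⟩, ⟨_, h0'⟩⟩
    exact h0' h0
  have hmk1 : ∀ u v : V, φ u 0 = φ v 0 → F1.connectedComponentMk u = F1.connectedComponentMk v := by
    intro u v h0
    by_cases huv : u = v
    · rw [huv]
    · have h1 : φ u 1 ≠ φ v 1 := fun hh => hne huv (fin_two_funext h0 hh)
      exact SimpleGraph.ConnectedComponent.eq.mpr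
        (SimpleGraph.Adj.reachable ⟨(hadj u v).mpr (Or.inl ⟨h0, h1⟩), h0⟩)
  have hmk2 : ∀ u v : V, φ u 1 = φ v 1 → F2.connectedComponentMk u = F2.connectedComponentMk v := by
    intro u v h1
    by_cases huv : u = v
    · rw [huv]
    · have h0 : φ u 0 ≠ φ v 0 := fun hh => hne huv (fin_two_funext hh h1)
      exact SimpleGraph.ConnectedComponent.eq.mpr
        (SimpleGraph.Adj.reachable ⟨(hadj u v).mpr (Or.inr ⟨h0, h1⟩), h0⟩)
  let g1 : F1.ConnectedComponent → Fin k :=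
    SimpleGraph.ConnectedComponent.lift (fun v => φ v 0)
      (fun v w p _ => walk_const (G := F1) (fun v => φ v 0) (fun a b hab => hab.2) p)
  let g2 : F2.ConnectedComponent → Fin k :=
    SimpleGraph.ConnectedComponent.lift (fun v => φ v 1)
      (fun v w p _ => walk_const (G := F2) (fun v => φ v 1) (fun a b hab => hF2eq a b hab) p)
  have hg1 : Function.Injective g1 := by
    intro c c'
    obtain ⟨u, rfl⟩ := c.exists_rep
    obtain ⟨v, rfl⟩ := c'.exists_rep
    intro h
    exact hmk1 u v h
  have hg2 : Function.Injective g2 := by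
    intro c c'
    obtain ⟨u, rfl⟩ := c.exists_rep
    obtain ⟨v, rfl⟩ := c'.exists_rep
    intro h
    exact hmk2 u v h
  refine ⟨F1, F2, ⟨hsup, hdisj, hcl1, hcl2⟩, ?_, ?_⟩
  · calc Nat.card F1.ConnectedComponent ≤ Nat.card (Fin k) :=
          Nat.card_le_card_of_injective g1 hg1
      _ = k := Nat.card_eq_fintype_card.trans (Fintype.card_fin k)
  · calc Nat.card F2.ConnectedComponent ≤ Nat.card (Fin k) :=
          Nat.card_le_card_of_injective g2 hg2
      _ = k := Nat.card_eq_fintype_card.trans (Fintype.card_fin k)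

/-- For a 2-Hamming graph `H`, the least `k` with `H` an induced subgraph of `K_k □ K_k`
equals the least value, over all 2-Hamming decompositions `{F₁, F₂}` of `H`, of
`max (C(F₁), C(F₂))`, where `C(F)` is the number of connected components of `F`. -/
theorem twoHamming_min_eq {V : Type*} [Fintype V] (H : SimpleGraph V)
    (h2H : ∃ F1 F2 : SimpleGraph V, IsTwoHammingDecomp H F1 F2) :
    sInf {k : ℕ | Nonempty (H ↪g hammingGraph 2 k)} =
      sInf {m : ℕ | ∃ F1 F2 : SimpleGraph V, IsTwoHammingDecomp H F1 F2 ∧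
        m = max (Nat.card F1.ConnectedComponent) (Nat.card F2.ConnectedComponent)} := by
  set S1 := {k : ℕ | Nonempty (H ↪g hammingGraph 2 k)} with hS1
  set S2 := {m : ℕ | ∃ F1 F2 : SimpleGraph V, IsTwoHammingDecomp H F1 F2 ∧
      m = max (Nat.card F1.ConnectedComponent) (Nat.card F2.ConnectedComponent)} with hS2
  obtain ⟨F1, F2, hd⟩ := h2H
  have hS2ne : S2.Nonempty :=
    ⟨max (Nat.card F1.ConnectedComponent) (Nat.card F2.ConnectedComponent), F1, F2, hd, rfl⟩
  have hS1ne : S1.Nonempty := by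
    refine ⟨max (Nat.card F1.ConnectedComponent) (Nat.card F2.ConnectedComponent), ?_⟩
    exact decomp_embedding hd (le_max_left _ _) (le_max_right _ _)
  apply le_antisymm
  · obtain ⟨G1, G2, hd', hm⟩ := Nat.sInf_mem hS2ne
    apply Nat.sInf_le
    refine decomp_embedding hd' ?_ ?_
    · rw [hm]; exact le_max_left _ _
    · rw [hm]; exact le_max_right _ _
  · obtain ⟨φ⟩ := Nat.sInf_mem hS1ne
    obtain ⟨G1, G2, hd', h1, h2⟩ := embedding_decomp φ
    calc sInf S2 ≤ max (Nat.card G1.ConnectedComponent) (Nat.card G2.ConnectedComponent) :=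
          Nat.sInf_le ⟨G1, G2, hd', rfl⟩
      _ ≤ sInf S1 := max_le h1 h2
end

section
/- A graph H is 2-Hamming (an induced subgraph of K_k □ K_k for some k) if and only if H admits a 2-Hamming decomposition. -/
open SimpleGraph

/-- The setoid whose classes are the cliques of a cluster graph. -/
def clusterSetoid {V : Type*} (F : SimpleGraph V) (hF : IsClusterGraph F) : Setoid V :=
  ⟨fun u v => u = v ∨ F.Adj u v, by
    refine ⟨fun _ => Or.inl rfl, ?_, ?_⟩
    · rintro a b (rfl | h)
      · exact Or.inl rfl
      · exact Or.inr h.symm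
    · rintro a b c (rfl | h) (rfl | h')
      · exact Or.inl rfl
      · exact Or.inr h'
      · exact Or.inr h
      · by_cases hac : a = c
        · exact Or.inl hac
        · exact Or.inr (hF a b c h h' hac)⟩

/-- A graph is 2-Hamming (an induced subgraph of `K_k □ K_k` for some `k`) iff it admits a
2-Hamming decomposition. -/
theorem twoHamming_iff_decomp {V : Type*} [Fintype V] (H : SimpleGraph V) :
    (∃ k : ℕ, Nonempty (H ↪g hammingGraph 2 k)) ↔
      ∃ F1 F2 : SimpleGraph V, IsTwoHammingDecomp H F1 F2 := by
  classical
  constructor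
  · rintro ⟨k, ⟨f⟩⟩
    have key : ∀ u v, H.Adj u v →
        (f u 0 = f v 0 ∧ f u 1 ≠ f v 1) ∨ (f u 0 ≠ f v 0 ∧ f u 1 = f v 1) := by
      intro u v huv
      obtain ⟨i, hi, hu⟩ := f.map_adj_iff.mpr huv
      fin_cases i
      · refine Or.inr ⟨hi, ?_⟩
        by_contra h1
        exact absurd (hu 1 h1) (by decide)
      · refine Or.inl ⟨?_, hi⟩
        by_contra h0
        exact absurd (hu 0 h0) (by decide)
    set F1 : SimpleGraph V :=
      { Adj := fun u v => H.Adj u v ∧ f u 0 = f v 0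
        symm := ⟨fun u v h => ⟨h.1.symm, h.2.symm⟩⟩
        loopless := ⟨fun v h => H.loopless.irrefl v h.1⟩ } with hF1
    set F2 : SimpleGraph V :=
      { Adj := fun u v => H.Adj u v ∧ f u 1 = f v 1
        symm := ⟨fun u v h => ⟨h.1.symm, h.2.symm⟩⟩
        loopless := ⟨fun v h => H.loopless.irrefl v h.1⟩ } with hF2
    have adjF1 : ∀ u v, F1.Adj u v ↔ H.Adj u v ∧ f u 0 = f v 0 := fun _ _ => Iff.rfl
    have adjF2 : ∀ u v, F2.Adj u v ↔ H.Adj u v ∧ f u 1 = f v 1 := fun _ _ => Iff.rfl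
    refine ⟨F1, F2, ?_, ?_, ?_, ?_⟩
    · ext u v
      simp only [sup_adj, adjF1, adjF2]
      constructor
      · rintro (⟨h, -⟩ | ⟨h, -⟩) <;> exact h
      · intro h
        rcases key u v h with ⟨h0, -⟩ | ⟨-, h1⟩
        · exact Or.inl ⟨h, h0⟩
        · exact Or.inr ⟨h, h1⟩
    · rw [disjoint_iff]
      ext u v
      simp only [inf_adj, adjF1, adjF2, bot_adj, iff_false]
      rintro ⟨⟨h, h0⟩, ⟨-, h1⟩⟩
      rcases key u v h with ⟨-, h1'⟩ | ⟨h0', -⟩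
      · exact h1' h1
      · exact h0' h0
    · rintro u v w ⟨huv, h0uv⟩ ⟨hvw, h0vw⟩ hne
      have hfne : f u ≠ f w := fun h => hne (f.injective h)
      have h0 : f u 0 = f w 0 := h0uv.trans h0vw
      have h1 : f u 1 ≠ f w 1 := by
        intro h1
        apply hfne
        funext i
        fin_cases i
        · exact h0
        · exact h1
      refine ⟨f.map_adj_iff.mp ⟨1, h1, ?_⟩, h0⟩
      intro j hj
      fin_cases j
      · exact absurd h0 hj
      · rfl
    · rintro u v w ⟨huv, h1uv⟩ ⟨hvw, h1vw⟩ hne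
      have hfne : f u ≠ f w := fun h => hne (f.injective h)
      have h1 : f u 1 = f w 1 := h1uv.trans h1vw
      have h0 : f u 0 ≠ f w 0 := by
        intro h0
        apply hfne
        funext i
        fin_cases i
        · exact h0
        · exact h1
      refine ⟨f.map_adj_iff.mp ⟨0, h0, ?_⟩, h1⟩
      intro j hj
      fin_cases j
      · rfl
      · exact absurd h1 hj
  · rintro ⟨F1, F2, hsup, hdisj, hc1, hc2⟩
    have hd : ∀ u v, F1.Adj u v → F2.Adj u v → False := by
      intro u v h1 h2
      have h : (F1 ⊓ F2).Adj u v := ⟨h1, h2⟩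
      rw [disjoint_iff.mp hdisj] at h
      exact h
    set s1 := clusterSetoid F1 hc1 with hs1
    set s2 := clusterSetoid F2 hc2 with hs2
    have hcard1 : Fintype.card (Quotient s1) ≤ Fintype.card V := Fintype.card_quotient_le s1
    have hcard2 : Fintype.card (Quotient s2) ≤ Fintype.card V := Fintype.card_quotient_le s2
    obtain ⟨e1⟩ : Nonempty (Quotient s1 ↪ Fin (Fintype.card V)) :=
      Function.Embedding.nonempty_of_card_le (by simpa using hcard1)
    obtain ⟨e2⟩ : Nonempty (Quotient s2 ↪ Fin (Fintype.card V)) :=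
      Function.Embedding.nonempty_of_card_le (by simpa using hcard2)
    set g : V → (Fin 2 → Fin (Fintype.card V)) :=
      fun v => ![e1 (Quotient.mk s1 v), e2 (Quotient.mk s2 v)] with hg
    have g0 : ∀ v, g v 0 = e1 (Quotient.mk s1 v) := fun v => rfl
    have g1 : ∀ v, g v 1 = e2 (Quotient.mk s2 v) := fun v => rfl
    have heq1 : ∀ u v, g u 0 = g v 0 ↔ (u = v ∨ F1.Adj u v) := by
      intro u v
      rw [g0, g0, e1.apply_eq_iff_eq]
      exact ⟨fun h => Quotient.exact h, fun h => Quotient.sound h⟩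
    have heq2 : ∀ u v, g u 1 = g v 1 ↔ (u = v ∨ F2.Adj u v) := by
      intro u v
      rw [g1, g1, e2.apply_eq_iff_eq]
      exact ⟨fun h => Quotient.exact h, fun h => Quotient.sound h⟩
    refine ⟨Fintype.card V, ⟨⟨⟨g, ?_⟩, ?_⟩⟩⟩
    · intro u v huv
      by_contra hne
      rcases (heq1 u v).mp (by rw [huv]) with rfl | h1
      · exact hne rfl
      rcases (heq2 u v).mp (by rw [huv]) with rfl | h2
      · exact hne rfl
      exact hd u v h1 h2
    · intro u v
      show (∃! i, g u i ≠ g v i) ↔ H.Adj u v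
      constructor
      · rintro ⟨i, hi, hu⟩
        rw [← hsup, sup_adj]
        fin_cases i
        · -- coordinate 0 differs, coordinate 1 equal
          have h1 : g u 1 = g v 1 := by
            by_contra h1
            exact absurd (hu 1 h1) (by decide)
          rcases (heq2 u v).mp h1 with rfl | h2
          · exact absurd rfl hi
          · exact Or.inr h2
        · have h0 : g u 0 = g v 0 := by
            by_contra h0
            exact absurd (hu 0 h0) (by decide)
          rcases (heq1 u v).mp h0 with rfl | h1
          · exact absurd rfl hi
          · exact Or.inl h1
      · intro hadj
        have hne : u ≠ v := hadj.ne
        rw [← hsup, sup_adj] at hadj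
        rcases hadj with h1 | h2
        · have h0 : g u 0 = g v 0 := (heq1 u v).mpr (Or.inr h1)
          have hone : g u 1 ≠ g v 1 := by
            intro h
            rcases (heq2 u v).mp h with rfl | h2
            · exact hne rfl
            · exact hd u v h1 h2
          refine ⟨1, hone, ?_⟩
          intro j hj
          fin_cases j
          · exact absurd h0 hj
          · rfl
        · have hone : g u 1 = g v 1 := (heq2 u v).mpr (Or.inr h2)
          have h0 : g u 0 ≠ g v 0 := by
            intro h
            rcases (heq1 u v).mp h with rfl | h1
            · exact hne rfl
            · exact hd u v h1 h2
          refine ⟨0, h0, ?_⟩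
          intro j hj
          fin_cases j
          · rfl
          · exact absurd hone hj
end

section
/- The 2-Hamming decomposition of a connected 2-Hamming graph is unique: if a connected graph H has 2-Hamming decompositions {F₁, F₂} and {F₁*, F₂*}, then {F₁, F₂} = {F₁*, F₂*} (as unordered pairs of edge sets). -/
open SimpleGraph

section Aux

variable {V : Type*} {H F1 F2 F1' F2' : SimpleGraph V}

lemma thd_not_both (h : IsTwoHammingDecomp H F1 F2) {u v : V}
    (ha : F1.Adj u v) (hb : F2.Adj u v) : False := by
  have hle : F1 ⊓ F2 ≤ (⊥ : SimpleGraph V) := h.2.1.le_bot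
  have : (⊥ : SimpleGraph V).Adj u v := hle ⟨ha, hb⟩
  simp at this

lemma thd_mem (h : IsTwoHammingDecomp H F1 F2) {u v : V} (huv : H.Adj u v) :
    F1.Adj u v ∨ F2.Adj u v := by
  rw [← h.1] at huv; exact huv

lemma thd_le1 (h : IsTwoHammingDecomp H F1 F2) {u v : V} (huv : F1.Adj u v) :
    H.Adj u v := by
  rw [← h.1]; exact Or.inl huv

lemma thd_le2 (h : IsTwoHammingDecomp H F1 F2) {u v : V} (huv : F2.Adj u v) :
    H.Adj u v := by
  rw [← h.1]; exact Or.inr huv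

lemma thd_swap (h : IsTwoHammingDecomp H F1 F2) : IsTwoHammingDecomp H F2 F1 :=
  ⟨by rw [sup_comm]; exact h.1, h.2.1.symm, h.2.2.2, h.2.2.1⟩

/-- Two edges of `H` sharing a vertex are in the same part iff their endpoints are adjacent. -/
lemma thd_samePart (h : IsTwoHammingDecomp H F1 F2) {u v w : V}
    (huv : H.Adj u v) (hvw : H.Adj v w) (huw : u ≠ w) :
    ((F1.Adj u v ↔ F1.Adj v w) ↔ H.Adj u w) := by
  obtain ⟨hsup, hdis, hc1, hc2⟩ := h
  constructor
  · intro hiff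
    rcases thd_mem ⟨hsup, hdis, hc1, hc2⟩ huv with h1 | h2
    · exact thd_le1 ⟨hsup, hdis, hc1, hc2⟩ (hc1 u v w h1 (hiff.mp h1) huw)
    · have h2' : F2.Adj v w := by
        rcases thd_mem ⟨hsup, hdis, hc1, hc2⟩ hvw with hx | hx
        · exact absurd (hiff.mpr hx) (fun hy => thd_not_both ⟨hsup, hdis, hc1, hc2⟩ hy h2)
        · exact hx
      exact thd_le2 ⟨hsup, hdis, hc1, hc2⟩ (hc2 u v w h2 h2' huw)
  · intro hadj
    constructor
    · intro h1uv
      by_contra h1vw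
      have h2vw : F2.Adj v w := (thd_mem ⟨hsup, hdis, hc1, hc2⟩ hvw).resolve_left h1vw
      rcases thd_mem ⟨hsup, hdis, hc1, hc2⟩ hadj with hx | hx
      · exact h1vw (hc1 v u w h1uv.symm hx hvw.ne)
      · exact thd_not_both ⟨hsup, hdis, hc1, hc2⟩ h1uv
          (hc2 u w v hx h2vw.symm huv.ne)
    · intro h1vw
      by_contra h1uv
      have h2uv : F2.Adj u v := (thd_mem ⟨hsup, hdis, hc1, hc2⟩ huv).resolve_left h1uv
      rcases thd_mem ⟨hsup, hdis, hc1, hc2⟩ hadj with hx | hx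
      · exact h1uv (hc1 u w v hx h1vw.symm huv.ne)
      · exact thd_not_both ⟨hsup, hdis, hc1, hc2⟩ h1vw
          (hc2 v u w h2uv.symm hx hvw.ne)

/-- Agreement of the partitions propagates along an edge. -/
lemma thd_step (h : IsTwoHammingDecomp H F1 F2) (h' : IsTwoHammingDecomp H F1' F2')
    {x x' : V} (hQ : ∀ y, H.Adj x y → (F1.Adj x y ↔ F1'.Adj x y)) (hxx' : H.Adj x x') :
    ∀ y, H.Adj x' y → (F1.Adj x' y ↔ F1'.Adj x' y) := by
  intro y hy
  by_cases hxy : x = y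
  · subst hxy
    have := hQ x' hxx'
    rw [adj_comm, F1'.adj_comm]
    exact this
  · have l1 := thd_samePart h hxx' hy hxy
    have l2 := thd_samePart h' hxx' hy hxy
    have l3 := hQ x' hxx'
    tauto

lemma thd_key (hconn : H.Connected) (h : IsTwoHammingDecomp H F1 F2)
    (h' : IsTwoHammingDecomp H F1' F2') {a b : V}
    (hab : F1.Adj a b) (hab' : F1'.Adj a b) : F1 = F1' ∧ F2 = F2' := by
  have hQa : ∀ y, H.Adj a y → (F1.Adj a y ↔ F1'.Adj a y) := by
    intro y hy
    by_cases hby : b = y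
    · subst hby; exact ⟨fun _ => hab', fun _ => hab⟩
    · have l1 := thd_samePart h (thd_le1 h hab).symm hy hby
      have l2 := thd_samePart h' (thd_le1 h hab).symm hy hby
      have e1 : F1.Adj b a := hab.symm
      have e2 : F1'.Adj b a := hab'.symm
      tauto
  have hQ : ∀ x y, H.Adj x y → (F1.Adj x y ↔ F1'.Adj x y) := by
    have walk : ∀ {x z : V} (_ : H.Walk x z),
        (∀ y, H.Adj x y → (F1.Adj x y ↔ F1'.Adj x y)) →
        (∀ y, H.Adj z y → (F1.Adj z y ↔ F1'.Adj z y)) := by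
      intro x z p
      induction p with
      | nil => exact fun hq => hq
      | cons he _ ih => exact fun hq => ih (thd_step h h' hq he)
    intro x y hxy
    exact walk (hconn a x).some hQa y hxy
  have hF1 : F1 = F1' := by
    ext u v
    constructor
    · intro hx; exact (hQ u v (thd_le1 h hx)).mp hx
    · intro hx; exact (hQ u v (thd_le1 h' hx)).mpr hx
  refine ⟨hF1, ?_⟩
  ext u v
  constructor
  · intro hx
    have hH := thd_le2 h hx
    have : ¬F1'.Adj u v := fun hy =>
      thd_not_both h (hF1 ▸ hy) hx
    exact (thd_mem h' hH).resolve_left this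
  · intro hx
    have hH := thd_le2 h' hx
    have : ¬F1.Adj u v := fun hy =>
      thd_not_both h' (hF1 ▸ hy) hx
    exact (thd_mem h hH).resolve_left this

end Aux

/-- The 2-Hamming decomposition of a connected graph is unique as an unordered pair. -/
theorem twoHamming_decomp_unique {V : Type*} (H F1 F2 F1' F2' : SimpleGraph V)
    (hconn : H.Connected) (h1 : IsTwoHammingDecomp H F1 F2)
    (h2 : IsTwoHammingDecomp H F1' F2') :
    (F1 = F1' ∧ F2 = F2') ∨ (F1 = F2' ∧ F2 = F1') := by
  by_cases hE : ∃ u v, H.Adj u v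
  · obtain ⟨u, v, huv⟩ := hE
    rcases thd_mem h1 huv with ha | ha <;> rcases thd_mem h2 huv with hb | hb
    · exact Or.inl (thd_key hconn h1 h2 ha hb)
    · exact Or.inr (thd_key hconn h1 (thd_swap h2) ha hb)
    · obtain ⟨p, q⟩ := thd_key hconn (thd_swap h1) h2 ha hb
      exact Or.inr ⟨q, p⟩
    · obtain ⟨p, q⟩ := thd_key hconn (thd_swap h1) (thd_swap h2) ha hb
      exact Or.inl ⟨q, p⟩
  · push_neg at hE
    have bot : ∀ (G F : SimpleGraph V), G ⊔ F = H → G = ⊥ := by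
      intro G F hGF
      ext u v
      simp only [bot_adj, iff_false]
      intro hx
      exact hE u v (by rw [← hGF]; exact Or.inl hx)
    have b1 := bot F1 F2 h1.1
    have b2 := bot F2 F1 (by rw [sup_comm]; exact h1.1)
    have b3 := bot F1' F2' h2.1
    have b4 := bot F2' F1' (by rw [sup_comm]; exact h2.1)
    exact Or.inl ⟨b1.trans b3.symm, b2.trans b4.symm⟩
end

section
/- Let H be a prime graph and G an H-induced-saturated graph. Then the blowup product G ⋆ G is also H-induced-saturated. -/
open SimpleGraph

/-- `G` is `H`-induced-saturated: `G` has no induced copy of `H`, but deleting any edge of `G`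
or adding any non-edge of `G` creates an induced copy of `H`. -/
def IsInducedSaturated {V W : Type*} (G : SimpleGraph V) (H : SimpleGraph W) : Prop :=
  ¬ Nonempty (H ↪g G) ∧
  (∀ u v : V, G.Adj u v → Nonempty (H ↪g G.deleteEdges {s(u, v)})) ∧
  (∀ u v : V, u ≠ v → ¬ G.Adj u v →
    Nonempty (H ↪g (G ⊔ SimpleGraph.fromEdgeSet {s(u, v)})))

/-- `X` is a homogeneous set for `G`: every vertex outside `X` is adjacent to all of `X`
or to none of `X`. -/
def IsHomogeneousSet {V : Type*} (G : SimpleGraph V) (X : Set V) : Prop :=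
  ∀ v ∉ X, (∀ x ∈ X, G.Adj v x) ∨ (∀ x ∈ X, ¬ G.Adj v x)

/-- A graph is prime if it has no homogeneous set `X` with `2 ≤ |X|` and `X` proper. -/
def IsPrimeGraph {V : Type*} (G : SimpleGraph V) : Prop :=
  ∀ X : Set V, X.Nontrivial → X ≠ Set.univ → ¬ IsHomogeneousSet G X

/-- The blowup product `G₁ ⋆ G₂`: blow up each vertex of `G₁` and insert a copy of `G₂`
in each blob. -/
def blowupProd {V W : Type*} (G1 : SimpleGraph V) (G2 : SimpleGraph W) :
    SimpleGraph (V × W) where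
  Adj a b := G1.Adj a.1 b.1 ∨ (a.1 = b.1 ∧ G2.Adj a.2 b.2)
  symm := by
    refine ⟨?_⟩
    rintro a b (h | ⟨h1, h2⟩)
    · exact Or.inl h.symm
    · exact Or.inr ⟨h1.symm, h2.symm⟩
  loopless := by
    refine ⟨?_⟩
    rintro a (h | ⟨-, h⟩)
    · exact G1.irrefl h
    · exact G2.irrefl h

lemma blowupProd_adj' {V W : Type*} (G1 : SimpleGraph V) (G2 : SimpleGraph W)
    (a1 b1 : V) (a2 b2 : W) :
    (blowupProd G1 G2).Adj (a1, a2) (b1, b2) ↔ G1.Adj a1 b1 ∨ (a1 = b1 ∧ G2.Adj a2 b2) :=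
  Iff.rfl

lemma sym2_pair_eq {V : Type*} (u x y v₁ v₂ : V) :
    s((u, x), (u, y)) = s((u, v₁), (u, v₂)) ↔ s(x, y) = s(v₁, v₂) := by
  simp only [Sym2.eq_iff, Prod.ext_iff]
  tauto

lemma sym2_sigma {V : Type*} {u₁ u₂ : V} (v₁ v₂ x y : V) [Decidable (x = u₂)]
    [Decidable (y = u₂)] (h12 : u₁ ≠ u₂) :
    s((x, if x = u₂ then v₂ else v₁), (y, if y = u₂ then v₂ else v₁)) =
      s((u₁, v₁), (u₂, v₂)) ↔ s(x, y) = s(u₁, u₂) := by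
  constructor
  · rw [Sym2.eq_iff, Sym2.eq_iff]
    rintro (⟨h1, h2⟩ | ⟨h1, h2⟩) <;>
      simp only [Prod.ext_iff] at h1 h2 <;> tauto
  · intro h
    rw [Sym2.eq_iff] at h ⊢
    rcases h with ⟨rfl, rfl⟩ | ⟨rfl, rfl⟩
    · left; simp [h12]
    · right; simp [h12, Ne.symm h12]

/-- If `H` is prime and `G` is `H`-induced-saturated, then `G ⋆ G` is also
`H`-induced-saturated. -/
theorem blowup_inducedSaturated {V W : Type*} (G : SimpleGraph V) (H : SimpleGraph W)
    (hH : IsPrimeGraph H) (hG : IsInducedSaturated G H) :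
    IsInducedSaturated (blowupProd G G) H := by
  classical
  obtain ⟨hG1, hG2, hG3⟩ := hG
  refine ⟨?_, ?_, ?_⟩
  · -- no induced copy of H in the blowup
    rintro ⟨f⟩
    apply hG1
    have hhom : ∀ u : V, IsHomogeneousSet H {w | (f w).1 = u} := by
      intro u w hw
      simp only [Set.mem_setOf_eq] at hw
      by_cases h : G.Adj (f w).1 u
      · left
        intro x hx
        simp only [Set.mem_setOf_eq] at hx
        rw [← f.map_rel_iff]
        exact Or.inl (hx ▸ h)
      · right
        intro x hx hadj
        simp only [Set.mem_setOf_eq] at hx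
        rw [← f.map_rel_iff] at hadj
        rcases hadj with h' | ⟨h', -⟩
        · exact h (hx ▸ h')
        · exact hw (hx ▸ h')
    by_cases hu : ∃ u, {w | (f w).1 = u} = Set.univ
    · obtain ⟨u, hu⟩ := hu
      have hall : ∀ w, (f w).1 = u := fun w => Set.eq_univ_iff_forall.1 hu w
      refine ⟨⟨fun w => (f w).2, fun w w' h => ?_⟩, fun {w w'} => ?_⟩
      · exact f.injective (Prod.ext (by rw [hall w, hall w']) h)
      · rw [← f.map_rel_iff]
        constructor
        · intro h
          exact f.map_rel_iff.2 (f.map_rel_iff.1 (Or.inr ⟨by rw [hall, hall], h⟩))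
        · rintro (h | ⟨-, h⟩)
          · rw [hall, hall] at h
            exact absurd h (G.irrefl)
          · exact h
    · push_neg at hu
      have hss : ∀ u, ({w | (f w).1 = u}).Subsingleton := by
        intro u
        by_contra hns
        exact hH _ (Set.not_subsingleton_iff.1 hns) (hu u) (hhom u)
      have hinj : Function.Injective (fun w => (f w).1) := by
        intro w w' h
        exact hss (f w').1 (by simpa using h) (by simp)
      refine ⟨⟨fun w => (f w).1, hinj⟩, fun {w w'} => ?_⟩
      constructor
      · intro h
        exact f.map_rel_iff.1 (Or.inl h)
      · intro h
        rcases f.map_rel_iff.2 h with h' | ⟨h', -⟩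
        · exact h'
        · exact absurd (hinj h') (H.ne_of_adj h)
  · -- deleting an edge
    rintro ⟨u₁, v₁⟩ ⟨u₂, v₂⟩ hab
    rcases hab with h | ⟨heq, h⟩
    · -- inter-blob edge
      have h12 : u₁ ≠ u₂ := G.ne_of_adj h
      obtain ⟨g⟩ := hG2 u₁ u₂ h
      refine ⟨⟨⟨fun w => (g w, if g w = u₂ then v₂ else v₁),
        Function.Injective.of_comp (f := Prod.fst) g.injective⟩, fun {w w'} => ?_⟩⟩
      rw [← g.map_rel_iff]
      by_cases hww : w = w'
      · subst hww
        simp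
      · have hg : g w ≠ g w' := fun h' => hww (g.injective h')
        have hb : (blowupProd G G).Adj (g w, if g w = u₂ then v₂ else v₁)
            (g w', if g w' = u₂ then v₂ else v₁) ↔ G.Adj (g w) (g w') := by
          constructor
          · rintro (h' | ⟨h', -⟩)
            · exact h'
            · exact absurd h' hg
          · exact Or.inl
        simp only [Function.Embedding.coeFn_mk]
        rw [deleteEdges_adj, deleteEdges_adj, hb]
        simp only [Set.mem_singleton_iff]
        rw [sym2_sigma v₁ v₂ (g w) (g w') h12]
    · -- intra-blob edge
      subst heq
      obtain ⟨g⟩ := hG2 v₁ v₂ h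
      refine ⟨⟨⟨fun w => (u₁, g w),
        Function.Injective.of_comp (f := Prod.snd) g.injective⟩, fun {w w'} => ?_⟩⟩
      rw [← g.map_rel_iff]
      have hb : (blowupProd G G).Adj (u₁, g w) (u₁, g w') ↔ G.Adj (g w) (g w') := by
        constructor
        · rintro (h' | ⟨-, h'⟩)
          · exact absurd h' (G.irrefl)
          · exact h'
        · exact fun h' => Or.inr ⟨rfl, h'⟩
      simp only [Function.Embedding.coeFn_mk]
      rw [deleteEdges_adj, deleteEdges_adj, hb]
      simp only [Set.mem_singleton_iff]
      rw [sym2_pair_eq]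
  · -- adding a non-edge
    rintro ⟨u₁, v₁⟩ ⟨u₂, v₂⟩ hne hnadj
    rw [blowupProd_adj'] at hnadj
    push_neg at hnadj
    obtain ⟨h1, h2⟩ := hnadj
    by_cases h12 : u₁ = u₂
    · -- same blob
      subst h12
      have hv : v₁ ≠ v₂ := fun hv => hne (by rw [hv])
      obtain ⟨g⟩ := hG3 v₁ v₂ hv (h2 rfl)
      refine ⟨⟨⟨fun w => (u₁, g w),
        Function.Injective.of_comp (f := Prod.snd) g.injective⟩, fun {w w'} => ?_⟩⟩
      rw [← g.map_rel_iff]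
      have hb : (blowupProd G G).Adj (u₁, g w) (u₁, g w') ↔ G.Adj (g w) (g w') := by
        constructor
        · rintro (h' | ⟨-, h'⟩)
          · exact absurd h' (G.irrefl)
          · exact h'
        · exact fun h' => Or.inr ⟨rfl, h'⟩
      simp only [Function.Embedding.coeFn_mk]
      rw [sup_adj, sup_adj, fromEdgeSet_adj, fromEdgeSet_adj, hb]
      simp only [Set.mem_singleton_iff, sym2_pair_eq, ne_eq, Prod.mk.injEq, true_and]
    · -- different blobs
      obtain ⟨g⟩ := hG3 u₁ u₂ h12 h1
      refine ⟨⟨⟨fun w => (g w, if g w = u₂ then v₂ else v₁),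
        Function.Injective.of_comp (f := Prod.fst) g.injective⟩, fun {w w'} => ?_⟩⟩
      rw [← g.map_rel_iff]
      by_cases hww : w = w'
      · subst hww
        simp
      · have hg : g w ≠ g w' := fun h' => hww (g.injective h')
        have hF : (g w, if g w = u₂ then v₂ else v₁) ≠
            (g w', if g w' = u₂ then v₂ else v₁) := fun h' => hg (congrArg Prod.fst h')
        have hb : (blowupProd G G).Adj (g w, if g w = u₂ then v₂ else v₁)
            (g w', if g w' = u₂ then v₂ else v₁) ↔ G.Adj (g w) (g w') := by
          constructor
          · rintro (h' | ⟨h', -⟩)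
            · exact h'
            · exact absurd h' hg
          · exact Or.inl
        simp only [Function.Embedding.coeFn_mk]
        rw [sup_adj, sup_adj, fromEdgeSet_adj, fromEdgeSet_adj, hb]
        simp only [Set.mem_singleton_iff, sym2_sigma v₁ v₂ (g w) (g w') h12, ne_eq, hF,
          not_false_eq_true, and_true, hg]
end

section
/- Let H be a prime graph for which some H-induced-saturated graph G exists. Then there exists a prime graph G' that is H-induced-saturated (namely, G itself if prime, or the subgraph induced by a minimal homogeneous set of G). -/
open SimpleGraph

universe u

/-- Key lemma: if `H` is prime and `X` is homogeneous in `K`, then any induced copy of `H`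
in `K` lies entirely inside `X`, or meets `X` in at most one vertex. -/
lemma homog_embedding {V W : Type*} (K : SimpleGraph V) (H : SimpleGraph W)
    (hH : IsPrimeGraph H) (X : Set V) (hX : IsHomogeneousSet K X) (f : H ↪g K) :
    (∀ w, f w ∈ X) ∨ (Set.range f ∩ X).Subsingleton := by
  by_cases hall : ∀ w, f w ∈ X
  · exact Or.inl hall
  right
  push_neg at hall
  obtain ⟨w0, hw0⟩ := hall
  have hYs : (f ⁻¹' X).Subsingleton := by
    by_contra hns
    have hnt : (f ⁻¹' X).Nontrivial := Set.not_subsingleton_iff.mp hns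
    have hYu : f ⁻¹' X ≠ Set.univ := by
      intro h
      rw [Set.eq_univ_iff_forall] at h
      exact hw0 (h w0)
    refine hH (f ⁻¹' X) hnt hYu ?_
    intro w hw
    rcases hX (f w) hw with h | h
    · exact Or.inl fun y hy => f.map_adj_iff.mp (h (f y) hy)
    · exact Or.inr fun y hy hadj => h (f y) hy (f.map_adj_iff.mpr hadj)
  rintro x1 ⟨⟨a, rfl⟩, hx1⟩ x2 ⟨⟨b, rfl⟩, hx2⟩
  exact congrArg f (hYs hx1 hx2)

/-- Transfer an induced copy between two graphs on the same vertex set that agree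
on all pairs from the image. -/
lemma emb_transfer {V W : Type*} {K G : SimpleGraph V} {H : SimpleGraph W}
    (f : H ↪g K) (h : ∀ a b : W, a ≠ b → (K.Adj (f a) (f b) ↔ G.Adj (f a) (f b))) :
    Nonempty (H ↪g G) := by
  refine ⟨⟨⟨f, f.injective⟩, ?_⟩⟩
  intro a b
  rcases eq_or_ne a b with rfl | hab
  · simp
  · exact ((h a b hab).symm.trans f.map_adj_iff)

/-- Transfer an induced copy whose image lies in `X` to a graph on `X`. -/
lemma emb_into_induce {V W : Type*} {K : SimpleGraph V} {H : SimpleGraph W} {X : Set V}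
    (T : SimpleGraph X) (f : H ↪g K) (hf : ∀ w, f w ∈ X)
    (hT : ∀ a b : W, T.Adj ⟨f a, hf a⟩ ⟨f b, hf b⟩ ↔ K.Adj (f a) (f b)) :
    Nonempty (H ↪g T) :=
  ⟨⟨⟨fun w => ⟨f w, hf w⟩, fun a b h => f.injective (congrArg Subtype.val h)⟩,
    fun {a b} => (hT a b).trans f.map_adj_iff⟩⟩

lemma homog_deleteEdges {V : Type*} {G : SimpleGraph V} {X : Set V}
    (hX : IsHomogeneousSet G X) {u v : V} (hu : u ∈ X) (hv : v ∈ X) :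
    IsHomogeneousSet (G.deleteEdges {s(u, v)}) X := by
  intro w hw
  rcases hX w hw with h | h
  · left
    intro x hx
    rw [deleteEdges_adj]
    refine ⟨h x hx, ?_⟩
    simp only [Set.mem_singleton_iff, Sym2.eq_iff]
    rintro (⟨rfl, rfl⟩ | ⟨rfl, rfl⟩) <;> exact hw ‹_›
  · right
    intro x hx hadj
    exact h x hx hadj.1

lemma homog_sup {V : Type*} {G : SimpleGraph V} {X : Set V}
    (hX : IsHomogeneousSet G X) {u v : V} (hu : u ∈ X) (hv : v ∈ X) :
    IsHomogeneousSet (G ⊔ fromEdgeSet {s(u, v)}) X := by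
  intro w hw
  rcases hX w hw with h | h
  · exact Or.inl fun x hx => Or.inl (h x hx)
  · right
    intro x hx hadj
    rcases hadj with h' | h'
    · exact h x hx h'
    · rcases Sym2.eq_iff.mp h'.1 with ⟨rfl, rfl⟩ | ⟨rfl, rfl⟩ <;> exact hw ‹_›

/-- If `H` is prime and some `H`-induced-saturated graph exists, then some prime
`H`-induced-saturated graph exists. -/
theorem exists_prime_inducedSaturated {V : Type u} {W : Type*} [Fintype V]
    (H : SimpleGraph W) (hH : IsPrimeGraph H) (G : SimpleGraph V)
    (hG : IsInducedSaturated G H) :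
    ∃ (V' : Type u) (G' : SimpleGraph V'), IsPrimeGraph G' ∧ IsInducedSaturated G' H := by
  classical
  by_cases hp : IsPrimeGraph G
  · exact ⟨V, G, hp, hG⟩
  unfold IsPrimeGraph at hp
  push_neg at hp
  obtain ⟨X0, hX0nt, hX0ne, hX0hom⟩ := hp
  obtain ⟨X, hXS, hmin⟩ := Set.exists_min_image
    {X : Set V | X.Nontrivial ∧ X ≠ Set.univ ∧ IsHomogeneousSet G X} Set.ncard
    (Set.toFinite _) ⟨X0, hX0nt, hX0ne, hX0hom⟩
  obtain ⟨hXnt, hXne, hXhom⟩ := hXS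
  refine ⟨X, G.induce X, ?_, ?_, ?_, ?_⟩
  · -- primality of the induced subgraph, by minimality of X
    intro Z hZnt hZne hZhom
    set Y : Set V := Subtype.val '' Z with hYdef
    have hYX : Y ⊆ X := by rintro _ ⟨z, hz, rfl⟩; exact z.2
    have hYnt : Y.Nontrivial := by
      obtain ⟨a, ha, b, hb, hab⟩ := hZnt
      exact ⟨a, ⟨a, ha, rfl⟩, b, ⟨b, hb, rfl⟩, fun h => hab (Subtype.ext h)⟩
    have hYne : Y ≠ Set.univ := fun h => hXne (Set.eq_univ_of_univ_subset (h ▸ hYX))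
    have hYhom : IsHomogeneousSet G Y := by
      intro w hw
      by_cases hwX : w ∈ X
      · have hwZ : (⟨w, hwX⟩ : X) ∉ Z := fun h => hw ⟨⟨w, hwX⟩, h, rfl⟩
        rcases hZhom ⟨w, hwX⟩ hwZ with h | h
        · left
          rintro _ ⟨z, hz, rfl⟩
          exact h z hz
        · right
          rintro _ ⟨z, hz, rfl⟩
          exact h z hz
      · rcases hXhom w hwX with h | h
        · exact Or.inl fun y hy => h y (hYX hy)
        · exact Or.inr fun y hy => h y (hYX hy)
    have hYssX : Y ⊂ X := by
      refine ⟨hYX, fun hXY => ?_⟩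
      obtain ⟨x, hx⟩ : ∃ x : X, x ∉ Z := by
        by_contra h
        push_neg at h
        exact hZne (Set.eq_univ_of_forall h)
      have : (x : V) ∈ Y := hXY x.2
      obtain ⟨z, hz, hze⟩ := this
      exact hx (Subtype.ext hze.symm ▸ hz)
    have hlt : Y.ncard < X.ncard := Set.ncard_lt_ncard hYssX (Set.toFinite X)
    have := hmin Y ⟨hYnt, hYne, hYhom⟩
    omega
  · -- no induced copy of H in the induced subgraph
    rintro ⟨f⟩
    exact hG.1 ⟨(SimpleGraph.Embedding.induce X).comp f⟩
  · -- deleting an edge creates a copy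
    intro u v huv
    have hGuv : G.Adj ↑u ↑v := huv
    obtain ⟨f⟩ := hG.2.1 ↑u ↑v hGuv
    have hhom := homog_deleteEdges hXhom u.2 v.2
    rcases homog_embedding _ H hH X hhom f with hall | hss
    · refine emb_into_induce _ f hall ?_
      intro a b
      simp only [deleteEdges_adj, comap_adj, Function.Embedding.coe_subtype,
        Set.mem_singleton_iff, Sym2.eq_iff, Subtype.ext_iff]
    · exfalso
      refine hG.1 (emb_transfer f ?_)
      intro a b hab
      have hne : s(f a, f b) ≠ s((u : V), (v : V)) := by
        intro he
        rcases Sym2.eq_iff.mp he with ⟨h1, h2⟩ | ⟨h1, h2⟩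
        · exact hGuv.ne (hss ⟨⟨a, h1⟩, u.2⟩ ⟨⟨b, h2⟩, v.2⟩)
        · exact hGuv.ne (hss ⟨⟨b, h2⟩, u.2⟩ ⟨⟨a, h1⟩, v.2⟩)
      simp [deleteEdges_adj, hne]
  · -- adding a non-edge creates a copy
    intro u v huv hnadj
    have hval : (u : V) ≠ (v : V) := fun h => huv (Subtype.ext h)
    have hGn : ¬ G.Adj ↑u ↑v := hnadj
    obtain ⟨f⟩ := hG.2.2 ↑u ↑v hval hGn
    have hhom := homog_sup hXhom u.2 v.2
    rcases homog_embedding _ H hH X hhom f with hall | hss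
    · refine emb_into_induce _ f hall ?_
      intro a b
      simp only [sup_adj, fromEdgeSet_adj, comap_adj, Function.Embedding.coe_subtype,
        Set.mem_singleton_iff, Sym2.eq_iff, Subtype.ext_iff, ne_eq]
    · exfalso
      refine hG.1 (emb_transfer f ?_)
      intro a b hab
      have hne : s(f a, f b) ≠ s((u : V), (v : V)) := by
        intro he
        rcases Sym2.eq_iff.mp he with ⟨h1, h2⟩ | ⟨h1, h2⟩
        · exact hval (hss ⟨⟨a, h1⟩, u.2⟩ ⟨⟨b, h2⟩, v.2⟩)
        · exact hval (hss ⟨⟨b, h2⟩, u.2⟩ ⟨⟨a, h1⟩, v.2⟩)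
      simp [sup_adj, fromEdgeSet_adj, hne]
end
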